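/- If P₂*P₂ satisfies a WPI with β, i.e. ‖f‖²_Π ≤ s·ℰ_Π(P₂*P₂, f) + β(s)·‖f‖²_osc for all s > 0 and f ∈ L²₀(Π), then P̄_X*P̄_X satisfies a WPI with the same β: ‖g‖²_{Π_X} ≤ s·ℰ_{Π_X}(P̄_X*P̄_X, g) + β(s)·‖g‖²_osc for all s > 0 and g ∈ L²₀(Π_X). -/

import Mathlib

/-!
Lift `g ∈ L²₀(Π_X)` to `F = g ∘ fst ∈ L²₀(Π)`. Each `H_{2|y}` is reversible, hence invariant, for
`Π_{X|Y}(·|y)`, so `Π`-null sets stay null under `H₂` and `H₂F(x, y) = ∫ g dH_{2|y}(·|x)`;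
averaging over `Π_{Y|X}(·|x)` gives `P₂F = (P̄_X g) ∘ fst`. The lift is an isometry preserving
means and oscillation, and `ℰ(T*T, f) = ‖f‖² − ‖Tf‖²`, so the WPI for `P₂*P₂` at `F` is exactly
the WPI for `P̄_X*P̄_X` at `g`.
-/

open MeasureTheory ENNReal

noncomputable section

/-- Oscillation seminorm, valued in `[0,∞]`. -/
def oscNorm {α : Type*} [MeasurableSpace α] (μ : Measure α) (f : α → ℝ) : ℝ≥0∞ :=
  essSup (fun p : α × α => ENNReal.ofReal |f p.1 - f p.2|) (μ.prod μ)

/-- The Dirichlet form `ℰ_μ(T, f) = ⟨(I − T)f, f⟩_μ`. -/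
def dirichletForm {α : Type*} [MeasurableSpace α]
    (μ : Measure α) (T : Lp ℝ 2 μ →L[ℝ] Lp ℝ 2 μ) (f : Lp ℝ 2 μ) : ℝ :=
  @inner ℝ _ _ (f - T f) f

/-- Reversibility of a kernel `k` with respect to `ν`. -/
def KernelReversible {α : Type*} [MeasurableSpace α] (ν : Measure α) (k : α → Measure α) : Prop :=
  ∀ A B : Set α, MeasurableSet A → MeasurableSet B →
    ∫⁻ x in A, k x B ∂ν = ∫⁻ x in B, k x A ∂ν

variable {X Y : Type*} [MeasurableSpace X] [MeasurableSpace Y]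

open ProbabilityTheory

variable {α β : Type*} [MeasurableSpace α] [MeasurableSpace β]

lemma dirichletForm_adjoint_comp_self (μ : Measure α) (T : Lp ℝ 2 μ →L[ℝ] Lp ℝ 2 μ)
    (f : Lp ℝ 2 μ) :
    dirichletForm μ (ContinuousLinearMap.adjoint T ∘L T) f = ‖f‖ ^ 2 - ‖T f‖ ^ 2 := by
  rw [dirichletForm, inner_sub_left, ContinuousLinearMap.comp_apply,
    ContinuousLinearMap.adjoint_inner_left, real_inner_self_eq_norm_sq, real_inner_self_eq_norm_sq]

lemma oscNorm_congr_ae {μ : Measure α} [SFinite μ] {f g : α → ℝ} (h : f =ᵐ[μ] g) :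
    oscNorm μ f = oscNorm μ g := by
  refine essSup_congr_ae ?_
  filter_upwards [Measure.quasiMeasurePreserving_fst.ae h,
    Measure.quasiMeasurePreserving_snd.ae h] with p hp₁ hp₂
  simp only [hp₁, hp₂]

lemma oscNorm_comp_measurePreserving {μ : Measure α} {ν : Measure β} [SFinite μ]
    {φ : α → β} (hφ : MeasurePreserving φ μ ν) {g : β → ℝ} (hg : Measurable g) :
    oscNorm μ (g ∘ φ) = oscNorm ν g := by
  have hmeas : Measurable fun q : β × β => ENNReal.ofReal |g q.1 - g q.2| := by fun_prop
  rw [oscNorm, oscNorm, ← hφ.map_eq, Measure.map_prod_map μ μ hφ.measurable hφ.measurable,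
    essSup_map_measure hmeas.aemeasurable (hφ.measurable.prodMap hφ.measurable).aemeasurable]
  rfl

lemma oscNorm_compMeasurePreserving {p : ℝ≥0∞} {μ : Measure α} {ν : Measure β} [SFinite μ]
    {φ : α → β} (hφ : MeasurePreserving φ μ ν) (g : Lp ℝ p ν) :
    oscNorm μ (Lp.compMeasurePreserving φ hφ g) = oscNorm ν g := by
  rw [oscNorm_congr_ae (Lp.coeFn_compMeasurePreserving g hφ),
    ← oscNorm_comp_measurePreserving hφ (Lp.stronglyMeasurable g).measurable]

lemma integral_compMeasurePreserving {p : ℝ≥0∞} {μ : Measure α} {ν : Measure β}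
    {φ : α → β} (hφ : MeasurePreserving φ μ ν) (g : Lp ℝ p ν) :
    ∫ x, Lp.compMeasurePreserving φ hφ g x ∂μ = ∫ y, g y ∂ν := by
  rw [integral_congr_ae (Lp.coeFn_compMeasurePreserving g hφ)]
  calc ∫ x, g (φ x) ∂μ = ∫ y, g y ∂(μ.map φ) :=
        (integral_map hφ.aemeasurable (hφ.map_eq ▸ Lp.aestronglyMeasurable g)).symm
    _ = ∫ y, g y ∂ν := by rw [hφ.map_eq]

lemma KernelReversible.comp_eq {ν : Measure α} {κ : Kernel α α} [IsMarkovKernel κ]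
    (hrev : KernelReversible ν κ) : κ ∘ₘ ν = ν := by
  ext A hA
  rw [Measure.bind_apply hA κ.aemeasurable, ← setLIntegral_univ, hrev _ _ .univ hA]
  simp

lemma bind_map_prodMk_eq_compProd (ν : Measure α) [SFinite ν] (κ : Kernel α β)
    [IsSFiniteKernel κ] : ν.bind (fun x => (κ x).map (Prod.mk x)) = ν ⊗ₘ κ := by
  rw [Measure.compProd_eq_comp_prod]
  congr 1
  ext1 x
  rw [Kernel.prod_apply, Kernel.id_apply, Measure.dirac_prod]

lemma bind_map_prodMk_swap_eq_map_compProd (ν : Measure β) [SFinite ν] (η : Kernel β α)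
    [IsSFiniteKernel η] :
    ν.bind (fun y => (η y).map (fun x => (x, y))) = (ν ⊗ₘ η).map Prod.swap := by
  rw [Measure.compProd_eq_comp_prod, Measure.map_comp _ _ measurable_swap]
  congr 1
  ext1 y
  rw [Kernel.map_apply _ measurable_swap, Kernel.prod_apply, Kernel.id_apply, Measure.dirac_prod,
    Measure.map_map measurable_swap measurable_prodMk_left]
  rfl

lemma ae_integral_prodMk_eq_of_ae_eq_compProd {ν : Measure α} [SFinite ν] {κ : Kernel α β}
    [IsSFiniteKernel κ] {π : Measure (α × β)} (hπ : π = ν ⊗ₘ κ) {f g : α × β → ℝ}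
    (h : f =ᵐ[π] g) : ∀ᵐ x ∂ν, ∫ y, f (x, y) ∂κ x = ∫ y, g (x, y) ∂κ x := by
  subst hπ
  filter_upwards [Measure.ae_ae_of_ae_compProd h] with x hx using integral_congr_ae hx

lemma ae_integral_eq_of_ae_eq_map_swap_compProd {ν : Measure β} [SFinite ν] {η : Kernel β α}
    [IsSFiniteKernel η] {K : Kernel (α × β) α} [IsMarkovKernel K]
    (hrev : ∀ y, KernelReversible (η y) (fun x => K (x, y))) {π : Measure (α × β)}
    (hπ : π = (ν ⊗ₘ η).map Prod.swap) {f g : α × β → ℝ} (hf : StronglyMeasurable f)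
    (hg : StronglyMeasurable g) (h : f =ᵐ[π] g) :
    ∀ᵐ p ∂π, ∫ x', f (x', p.2) ∂K p = ∫ x', g (x', p.2) ∂K p := by
  subst hπ
  have h_sect : ∀ᵐ y ∂ν, ∀ᵐ x ∂η y, f (x, y) = g (x, y) :=
    Measure.ae_ae_of_ae_compProd (ae_of_ae_map measurable_swap.aemeasurable h)
  have h_int : ∀ᵐ y ∂ν, ∀ᵐ x ∂η y, ∫ x', f (x', y) ∂K (x, y) = ∫ x', g (x', y) ∂K (x, y) := by
    filter_upwards [h_sect] with y hy
    -- reversibility makes `η y` invariant under `K(·, y)`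
    rw [← KernelReversible.comp_eq (κ := K.comap (·, y) measurable_prodMk_right) (hrev y)] at hy
    filter_upwards [Measure.ae_ae_of_ae_comp hy] with x hx using integral_congr_ae hx
  have stronglyMeasurable_integral : ∀ {u : α × β → ℝ}, StronglyMeasurable u →
      StronglyMeasurable fun p : α × β => ∫ x', u (x', p.2) ∂K p := fun hu =>
    (hu.comp_measurable (measurable_snd.prodMk measurable_fst.snd)).integral_kernel_prod_right'
  have h_meas : MeasurableSet {p : α × β | ∫ x', f (x', p.2) ∂K p = ∫ x', g (x', p.2) ∂K p} :=
    (stronglyMeasurable_integral hf).measurableSet_eq_fun (stronglyMeasurable_integral hg)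
  rw [ae_map_iff measurable_swap.aemeasurable h_meas]
  exact Measure.ae_compProd_of_ae_ae (h_meas.preimage measurable_swap) h_int

lemma apply_apply_compMeasurePreserving_fst {p : ℝ≥0∞} {π : Measure (α × β)} [SFinite π]
    (hfst : MeasurePreserving Prod.fst π π.fst)
    {κ : Kernel α β} [IsSFiniteKernel κ] (hκ : π = π.fst ⊗ₘ κ)
    {η : Kernel β α} [IsSFiniteKernel η] (hη : π = (π.snd ⊗ₘ η).map Prod.swap)
    {K : Kernel (α × β) α} [IsMarkovKernel K]
    (hrev : ∀ y, KernelReversible (η y) (fun x => K (x, y)))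
    {G H : Lp ℝ p π → Lp ℝ p π} (hG : ∀ f, ∀ᵐ q ∂π, G f q = ∫ y', f (q.1, y') ∂κ q.1)
    (hH : ∀ f, ∀ᵐ q ∂π, H f q = ∫ x', f (x', q.2) ∂K q)
    {P : Lp ℝ p π.fst → Lp ℝ p π.fst}
    (hP : ∀ g, ∀ᵐ x ∂π.fst, P g x = ∫ y, ∫ x', g x' ∂K (x, y) ∂κ x) (g : Lp ℝ p π.fst) :
    G (H (Lp.compMeasurePreserving Prod.fst hfst g)) =
      Lp.compMeasurePreserving Prod.fst hfst (P g) := by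
  set F := Lp.compMeasurePreserving Prod.fst hfst g
  have hF : F =ᵐ[π] fun q => g q.1 := Lp.coeFn_compMeasurePreserving g hfst
  have hHF : H F =ᵐ[π] fun q => ∫ x', g x' ∂K q := by
    filter_upwards [hH F, ae_integral_eq_of_ae_eq_map_swap_compProd hrev hη
      (Lp.stronglyMeasurable F) ((Lp.stronglyMeasurable g).comp_measurable measurable_fst) hF]
      with q h₁ h₂
    exact h₁.trans h₂
  have hGHF : ∀ᵐ x ∂π.fst, ∫ y, H F (x, y) ∂κ x = ∫ y, ∫ x', g x' ∂K (x, y) ∂κ x :=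
    ae_integral_prodMk_eq_of_ae_eq_compProd hκ hHF
  refine Lp.ext ?_
  filter_upwards [hG (H F), hfst.quasiMeasurePreserving.ae hGHF,
    hfst.quasiMeasurePreserving.ae (hP g), Lp.coeFn_compMeasurePreserving (P g) hfst]
    with q h₁ h₂ h₃ h₄
  rw [h₁, h₂, h₄, Function.comp_apply, h₃]

theorem stmt14_general
    (π : Measure (X × Y)) [IsProbabilityMeasure π]
    (κ : X → Measure Y) (hκmeas : Measurable κ) (hκprob : ∀ x, IsProbabilityMeasure (κ x))
    (η : Y → Measure X) (hηmeas : Measurable η) (hηprob : ∀ y, IsProbabilityMeasure (η y))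
    (hκdis : π = (π.fst).bind (fun x => (κ x).map (fun y => (x, y))))
    (hηdis : π = (π.snd).bind (fun y => (η y).map (fun x => (x, y))))
    -- the operator G₁ on L²(π)
    (G₁ : Lp ℝ 2 π →L[ℝ] Lp ℝ 2 π)
    (hG₁ : ∀ f : Lp ℝ 2 π, ∀ᵐ p ∂π, G₁ f p = ∫ y', f (p.1, y') ∂(κ p.1))
    -- the operator H₂, induced by the kernel H_{2|y}(dx'|x), reversible for each y
    (KH₂ : X × Y → Measure X) (hKH₂meas : Measurable KH₂)
    (hKH₂prob : ∀ p, IsProbabilityMeasure (KH₂ p))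
    (hKH₂rev : ∀ y, KernelReversible (η y) (fun x => KH₂ (x, y)))
    (H₂ : Lp ℝ 2 π →L[ℝ] Lp ℝ 2 π)
    (hH₂ : ∀ f : Lp ℝ 2 π, ∀ᵐ p ∂π, H₂ f p = ∫ x', f (x', p.2) ∂(KH₂ p))
    -- the X-marginal operator P̄_X of P₂ = G₁H₂ on L²(π_X)
    (PbarX : Lp ℝ 2 π.fst →L[ℝ] Lp ℝ 2 π.fst)
    (hPbarX : ∀ g : Lp ℝ 2 π.fst, ∀ᵐ x ∂π.fst,
      PbarX g x = ∫ y, (∫ x', g x' ∂(KH₂ (x, y))) ∂(κ x))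
    -- β and the WPI for P₂*P₂
    (β : ℝ → ℝ)
    (hwpi : ∀ s : ℝ, 0 < s → ∀ f : Lp ℝ 2 π, (∫ p, f p ∂π) = 0 →
      ENNReal.ofReal (‖f‖ ^ 2) ≤
        ENNReal.ofReal
            (s * dirichletForm π
              ((ContinuousLinearMap.adjoint (G₁ ∘L H₂)) ∘L (G₁ ∘L H₂)) f) +
          ENNReal.ofReal (β s) * (oscNorm π f) ^ 2) :
    ∀ s : ℝ, 0 < s → ∀ g : Lp ℝ 2 π.fst, (∫ x, g x ∂π.fst) = 0 →
      ENNReal.ofReal (‖g‖ ^ 2) ≤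
        ENNReal.ofReal
            (s * dirichletForm π.fst ((ContinuousLinearMap.adjoint PbarX) ∘L PbarX) g) +
          ENNReal.ofReal (β s) * (oscNorm π.fst g) ^ 2 := by
  intro s hs g hg
  have : IsMarkovKernel (⟨κ, hκmeas⟩ : Kernel X Y) := ⟨hκprob⟩
  have : IsMarkovKernel (⟨η, hηmeas⟩ : Kernel Y X) := ⟨hηprob⟩
  have : IsMarkovKernel (⟨KH₂, hKH₂meas⟩ : Kernel (X × Y) X) := ⟨hKH₂prob⟩
  have hfst : MeasurePreserving Prod.fst π π.fst := ⟨measurable_fst, rfl⟩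
  have hlift : G₁ (H₂ (Lp.compMeasurePreserving Prod.fst hfst g)) =
      Lp.compMeasurePreserving Prod.fst hfst (PbarX g) :=
    apply_apply_compMeasurePreserving_fst (K := ⟨KH₂, hKH₂meas⟩) hfst
      (hκdis.trans (bind_map_prodMk_eq_compProd π.fst ⟨κ, hκmeas⟩))
      (hηdis.trans (bind_map_prodMk_swap_eq_map_compProd π.snd ⟨η, hηmeas⟩))
      hKH₂rev hG₁ hH₂ hPbarX g
  have h := hwpi s hs _ ((integral_compMeasurePreserving hfst g).trans hg)
  rwa [dirichletForm_adjoint_comp_self, ContinuousLinearMap.comp_apply, hlift,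
    Lp.norm_compMeasurePreserving, Lp.norm_compMeasurePreserving, ← dirichletForm_adjoint_comp_self,
    oscNorm_compMeasurePreserving] at h

/-- if `P₂*P₂` satisfies a WPI with `β`, then the `X`-marginal kernel `P̄_X`
of `P₂` satisfies a WPI for `P̄_X*P̄_X` with the same `β`. -/
theorem stmt14
    (π : Measure (X × Y)) [IsProbabilityMeasure π]
    (κ : X → Measure Y) (hκmeas : Measurable κ) (hκprob : ∀ x, IsProbabilityMeasure (κ x))
    (η : Y → Measure X) (hηmeas : Measurable η) (hηprob : ∀ y, IsProbabilityMeasure (η y))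
    (hκdis : π = (π.fst).bind (fun x => (κ x).map (fun y => (x, y))))
    (hηdis : π = (π.snd).bind (fun y => (η y).map (fun x => (x, y))))
    -- the operator G₁ on L²(π)
    (G₁ : Lp ℝ 2 π →L[ℝ] Lp ℝ 2 π)
    (hG₁ : ∀ f : Lp ℝ 2 π, ∀ᵐ p ∂π, G₁ f p = ∫ y', f (p.1, y') ∂(κ p.1))
    -- the operator H₂, induced by the kernel H_{2|y}(dx'|x), reversible for each y
    (KH₂ : X × Y → Measure X) (hKH₂meas : Measurable KH₂)
    (hKH₂prob : ∀ p, IsProbabilityMeasure (KH₂ p))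
    (hKH₂rev : ∀ y, KernelReversible (η y) (fun x => KH₂ (x, y)))
    (H₂ : Lp ℝ 2 π →L[ℝ] Lp ℝ 2 π)
    (hH₂ : ∀ f : Lp ℝ 2 π, ∀ᵐ p ∂π, H₂ f p = ∫ x', f (x', p.2) ∂(KH₂ p))
    -- the X-marginal operator P̄_X of P₂ = G₁H₂ on L²(π_X)
    (PbarX : Lp ℝ 2 π.fst →L[ℝ] Lp ℝ 2 π.fst)
    (hPbarX : ∀ g : Lp ℝ 2 π.fst, ∀ᵐ x ∂π.fst,
      PbarX g x = ∫ y, (∫ x', g x' ∂(KH₂ (x, y))) ∂(κ x))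
    -- β and the WPI for P₂*P₂
    (β : ℝ → ℝ) (hβnonneg : ∀ s : ℝ, 0 < s → 0 ≤ β s)
    (hβanti : AntitoneOn β (Set.Ioi (0 : ℝ)))
    (hβlim : Filter.Tendsto β Filter.atTop (nhds 0))
    (hwpi : ∀ s : ℝ, 0 < s → ∀ f : Lp ℝ 2 π, (∫ p, f p ∂π) = 0 →
      ENNReal.ofReal (‖f‖ ^ 2) ≤
        ENNReal.ofReal
            (s * dirichletForm π
              ((ContinuousLinearMap.adjoint (G₁ ∘L H₂)) ∘L (G₁ ∘L H₂)) f) +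
          ENNReal.ofReal (β s) * (oscNorm π f) ^ 2) :
    ∀ s : ℝ, 0 < s → ∀ g : Lp ℝ 2 π.fst, (∫ x, g x ∂π.fst) = 0 →
      ENNReal.ofReal (‖g‖ ^ 2) ≤
        ENNReal.ofReal
            (s * dirichletForm π.fst ((ContinuousLinearMap.adjoint PbarX) ∘L PbarX) g) +
          ENNReal.ofReal (β s) * (oscNorm π.fst g) ^ 2 :=
  stmt14_general π κ hκmeas hκprob η hηmeas hηprob hκdis hηdis G₁ hG₁ KH₂ hKH₂meas hKH₂prob hKH₂rev
    H₂ hH₂ PbarX hPbarX β hwpi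

end
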